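/- For every digraph H, the fractional hypertreewidth of the reachability hypergraph of H is at most the fractional cover number of H: fhtw(R(H)) ≤ ρ*(H). -/

import Mathlib

noncomputable section

/-! ### Hypergraphs -/

/-- A hypergraph: a vertex set together with a set of nonempty hyperedges. -/
structure HGraph (V : Type) where
  verts : Set V
  edges : Set (Set V)
  edge_nonempty : ∀ e ∈ edges, e.Nonempty
  edge_subset : ∀ e ∈ edges, e ⊆ verts

namespace HGraph

variable {V : Type}

/-- An independent set: no two of its vertices lie in a common hyperedge. -/
def IsIndepSet (H : HGraph V) (I : Set V) : Prop :=
  I ⊆ H.verts ∧ ∀ u ∈ I, ∀ v ∈ I, u ≠ v → ∀ e ∈ H.edges, ¬(u ∈ e ∧ v ∈ e)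

/-- The independence number `α`. -/
def indepNum (H : HGraph V) : ℕ :=
  sSup {n | ∃ I : Set V, H.IsIndepSet I ∧ I.ncard = n}

/-- A fractional independent set: `μ : V(H) → [0,1]` with `∑_{v ∈ e} μ v ≤ 1` for each edge. -/
def IsFracIndep (H : HGraph V) (μ : V → ℝ) : Prop :=
  (∀ v, 0 ≤ μ v ∧ μ v ≤ 1) ∧ (∀ v, v ∉ H.verts → μ v = 0) ∧
    ∀ e ∈ H.edges, (∑ᶠ v ∈ e, μ v) ≤ 1

/-- The weight of a (fractional independent) vertex-weighting. -/
def weight (H : HGraph V) (μ : V → ℝ) : ℝ := ∑ᶠ v ∈ H.verts, μ v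

/-- The fractional independence number `α*`. -/
def fracIndepNum (H : HGraph V) : ℝ :=
  sSup {w | ∃ μ : V → ℝ, H.IsFracIndep μ ∧ H.weight μ = w}

/-- A fractional edge cover of a set `X` of vertices. -/
def IsFracEdgeCover (H : HGraph V) (X : Set V) (γ : Set V → ℝ) : Prop :=
  (∀ e, 0 ≤ γ e) ∧ (∀ e, e ∉ H.edges → γ e = 0) ∧
    ∀ v ∈ X, 1 ≤ ∑ᶠ e ∈ {e ∈ H.edges | v ∈ e}, γ e

/-- The weight of an edge-weighting. -/
def coverWeight (H : HGraph V) (γ : Set V → ℝ) : ℝ := ∑ᶠ e ∈ H.edges, γ e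

/-- `ρ*_H(X)`: the fractional edge cover number of a set `X` of vertices. -/
def fracCoverOf (H : HGraph V) (X : Set V) : ℝ :=
  sInf {w | ∃ γ : Set V → ℝ, H.IsFracEdgeCover X γ ∧ H.coverWeight γ = w}

/-- The fractional edge cover number `ρ*(H)`. -/
def fracEdgeCoverNum (H : HGraph V) : ℝ := H.fracCoverOf H.verts

/-- A tree decomposition of a hypergraph. -/
structure TreeDecomp (H : HGraph V) where
  n : ℕ
  tree : SimpleGraph (Fin n)
  isTree : tree.IsTree
  bag : Fin n → Set V
  bag_subset : ∀ t, bag t ⊆ H.verts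
  verts_covered : ∀ v ∈ H.verts, ∃ t, v ∈ bag t
  edges_covered : ∀ e ∈ H.edges, ∃ t, e ⊆ bag t
  bags_connected : ∀ (v : V) (t₁ t₂ : Fin n) (h₁ : v ∈ bag t₁) (h₂ : v ∈ bag t₂),
    (tree.induce {t | v ∈ bag t}).Reachable ⟨t₁, h₁⟩ ⟨t₂, h₂⟩

/-- The `μ`-width of a tree decomposition: the maximum `μ`-weight of a bag. -/
def TreeDecomp.muWidth {H : HGraph V} (td : H.TreeDecomp) (μ : V → ℝ) : ℝ :=
  ⨆ t, ∑ᶠ v ∈ td.bag t, μ v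

/-- The `μ`-width of a hypergraph: minimum `μ`-width over tree decompositions. -/
def muWidth (H : HGraph V) (μ : V → ℝ) : ℝ :=
  sInf {w | ∃ td : H.TreeDecomp, td.muWidth μ = w}

/-- The adaptive width `aw(H)`: supremum of the `μ`-widths over fractional
independent sets `μ`. -/
def adaptiveWidth (H : HGraph V) : ℝ :=
  sSup {w | ∃ μ : V → ℝ, H.IsFracIndep μ ∧ H.muWidth μ = w}

/-- The fractional hypertreewidth `fhtw(H)`. -/
def fhtw (H : HGraph V) : ℝ :=
  sInf {w | ∃ td : H.TreeDecomp, (⨆ t, H.fracCoverOf (td.bag t)) = w}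

/-- Add a new vertex `v'` to the hypergraph and replace the hyperedge `e` by `e ∪ {v'}`. -/
def extendEdge (H : HGraph V) (e : Set V) (he : e ∈ H.edges) (v' : V) :
    HGraph V where
  verts := insert v' H.verts
  edges := (H.edges \ {e}) ∪ {insert v' e}
  edge_nonempty := by
    rintro f (⟨hf, -⟩ | hf)
    · exact H.edge_nonempty f hf
    · rw [Set.mem_singleton_iff] at hf; subst hf; exact ⟨v', Set.mem_insert _ _⟩
  edge_subset := by
    rintro f (⟨hf, -⟩ | hf)
    · exact (H.edge_subset f hf).trans (Set.subset_insert _ _)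
    · rw [Set.mem_singleton_iff] at hf; subst hf
      exact Set.insert_subset_insert (H.edge_subset e he)

end HGraph

/-! ### Digraphs -/

namespace Digraph

variable {V A B : Type}

/-- `u` reaches `v` by a directed path (possibly of length 0). -/
def Reaches (G : Digraph V) (u v : V) : Prop := Relation.ReflTransGen G.Adj u v

/-- `R(u)`: the set of vertices reachable from `u` (including `u`). -/
def reachSet (G : Digraph V) (u : V) : Set V := {v | G.Reaches u v}

/-- The setoid whose classes are the strongly connected components. -/
def sccSetoid (G : Digraph V) : Setoid V where
  r u v := G.Reaches u v ∧ G.Reaches v u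
  iseqv := ⟨fun _ => ⟨.refl, .refl⟩, fun h => ⟨h.2, h.1⟩,
    fun h₁ h₂ => ⟨h₁.1.trans h₂.1, h₂.2.trans h₁.2⟩⟩

/-- The condensation `H/∼`: the loop-free DAG obtained by contracting each strongly
connected component to a single vertex. -/
def cond (G : Digraph V) : Digraph (Quotient G.sccSetoid) where
  Adj X Y := X ≠ Y ∧ ∃ a b, Quotient.mk G.sccSetoid a = X ∧
    Quotient.mk G.sccSetoid b = Y ∧ G.Adj a b

/-- `v` lies in a source component: its strongly connected component is not
reachable from any other component. -/
def InSourceComp (G : Digraph V) (v : V) : Prop := ∀ u, G.Reaches u v → G.Reaches v u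

/-- `v` is a source: a vertex of in-degree `0`. -/
def IsSrc (G : Digraph V) (v : V) : Prop := ∀ u, ¬ G.Adj u v

/-- The reachability hypergraph `R(H)` of a digraph: vertices `V(H)`, one hyperedge
`R(s)` for each (representative `s` of a) source component. -/
def reachHyp (G : Digraph V) : HGraph V where
  verts := Set.univ
  edges := {e | ∃ s, G.InSourceComp s ∧ e = G.reachSet s}
  edge_nonempty := by rintro e ⟨s, -, rfl⟩; exact ⟨s, Relation.ReflTransGen.refl⟩
  edge_subset := fun e _ => Set.subset_univ e

/-- The contour `Γ(H)` of a digraph: the reachability hypergraph with all vertices of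
source components deleted (empty hyperedges discarded). -/
def contour (G : Digraph V) : HGraph V where
  verts := {v | ¬ G.InSourceComp v}
  edges := {e | (∃ s, G.InSourceComp s ∧
    e = G.reachSet s \ {v | G.InSourceComp v}) ∧ e.Nonempty}
  edge_nonempty := fun _ he => he.2
  edge_subset := by rintro e ⟨⟨s, -, rfl⟩, -⟩ v hv; exact hv.2

/-- The reachability hypergraph of a DAG: one hyperedge `R(s)` for each in-degree `0`
vertex `s`. -/
def dagReachHyp (G : Digraph V) : HGraph V where
  verts := Set.univ
  edges := {e | ∃ s, G.IsSrc s ∧ e = G.reachSet s}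
  edge_nonempty := by rintro e ⟨s, -, rfl⟩; exact ⟨s, Relation.ReflTransGen.refl⟩
  edge_subset := fun e _ => Set.subset_univ e

/-- The contour of a DAG: the reachability hypergraph with all sources deleted. -/
def dagContour (G : Digraph V) : HGraph V where
  verts := {v | ¬ G.IsSrc v}
  edges := {e | (∃ s, G.IsSrc s ∧ e = G.reachSet s \ {v | G.IsSrc v}) ∧ e.Nonempty}
  edge_nonempty := fun _ he => he.2
  edge_subset := by rintro e ⟨⟨s, -, rfl⟩, -⟩ v hv; exact hv.2

/-- A homomorphism of digraphs: a map preserving arcs. -/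
def IsHom (H : Digraph A) (G : Digraph B) (φ : A → B) : Prop :=
  ∀ ⦃u v⦄, H.Adj u v → G.Adj (φ u) (φ v)

/-- The tensor product of digraphs. -/
def tensor (G : Digraph A) (F : Digraph B) : Digraph (A × B) where
  Adj x y := G.Adj x.1 y.1 ∧ F.Adj x.2 y.2

/-- The induced subdigraph on a set of vertices. -/
def induce (G : Digraph A) (S : Set A) : Digraph S where
  Adj a b := G.Adj a.1 b.1

/-- The quotient digraph `H/σ` of a digraph by a partition (setoid) of its vertices. -/
def quot (H : Digraph A) (σ : Setoid A) : Digraph (Quotient σ) where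
  Adj X Y := ∃ a b, Quotient.mk σ a = X ∧ Quotient.mk σ b = Y ∧ H.Adj a b

/-- A loop-free digraph. -/
def LoopFree (H : Digraph A) : Prop := ∀ v, ¬ H.Adj v v

/-- A digraph without directed cycles (in particular, without loops). -/
def IsAcyclic (H : Digraph A) : Prop := ∀ u v, H.Adj u v → ¬ H.Reaches v u

/-- A canonical DAG: a DAG in which every vertex has in-degree 0 or out-degree 0. -/
def IsCanonicalDAG (H : Digraph A) : Prop :=
  H.IsAcyclic ∧ ∀ v, (∀ u, ¬ H.Adj u v) ∨ (∀ u, ¬ H.Adj v u)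

/-- `t` lies in a sink component: from its strongly connected component no other
component is reachable. -/
def IsSinkVert (H : Digraph A) (t : A) : Prop := ∀ v, H.Reaches t v → H.Reaches v t

/-- Sink deletion: delete all vertices of the strongly connected component of `t`. -/
def sinkDelete (H : Digraph A) (t : A) :
    Digraph {v : A // ¬ (H.Reaches v t ∧ H.Reaches t v)} where
  Adj a b := H.Adj a.1 b.1

/-- Loop deletion: delete the loop at `u`. -/
def deleteLoop (H : Digraph A) (u : A) : Digraph A where
  Adj a b := H.Adj a b ∧ ¬(a = u ∧ b = u)

/-- The number of sources (in-degree `0` vertices) of the condensation `H/∼`. -/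
def numSources (H : Digraph A) : ℕ :=
  {X : Quotient H.sccSetoid | ∀ Y, ¬ H.cond.Adj Y X}.ncard

end Digraph

/-- The number of homomorphisms from `H` to `G`. -/
def homCount {A B : Type} (H : Digraph A) (G : Digraph B) : ℕ :=
  Nat.card {φ : A → B // H.IsHom G φ}

/-- Two digraphs are isomorphic: a bijection of the vertex sets preserving arcs in
both directions. -/
def DigraphIso {A B : Type} (H : Digraph A) (G : Digraph B) : Prop :=
  ∃ e : A ≃ B, ∀ u v, H.Adj u v ↔ G.Adj (e u) (e v)

/-- The number of subgraphs of `G` (pairs of a vertex subset and an arc subset of `G`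
among those vertices) that are isomorphic to `H`. -/
def subCount {A B : Type} (H : Digraph A) (G : Digraph B) : ℕ :=
  Nat.card {p : Set B × (B → B → Prop) //
    (∀ a b, p.2 a b → a ∈ p.1 ∧ b ∈ p.1 ∧ G.Adj a b) ∧
    DigraphIso H (Digraph.mk fun (a b : p.1) => p.2 a b)}

/-- The number of vertex subsets of `G` inducing a subgraph isomorphic to `H`. -/
def indSubCount {A B : Type} (H : Digraph A) (G : Digraph B) : ℕ :=
  Nat.card {S : Set B // DigraphIso H (G.induce S)}

/-- `H'` is an arc supergraph of the loop-free digraph `H`: a loop-free digraph on the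
same vertex set whose arc set contains that of `H`. -/
def ArcSupergraph {A : Type} (H H' : Digraph A) : Prop :=
  H'.LoopFree ∧ ∀ u v, H.Adj u v → H'.Adj u v

/-- The setoid identifying exactly `u` and `v`. -/
def pairSetoid {A : Type} (u v : A) : Setoid A where
  r a b := a = b ∨ (a ∈ ({u, v} : Set A) ∧ b ∈ ({u, v} : Set A))
  iseqv := by
    refine ⟨fun _ => Or.inl rfl, ?_, ?_⟩
    · rintro a b (rfl | ⟨h₁, h₂⟩)
      · exact Or.inl rfl
      · exact Or.inr ⟨h₂, h₁⟩
    · rintro a b c (rfl | ⟨h₁, h₂⟩) h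
      · exact h
      · rcases h with rfl | ⟨h₃, h₄⟩
        · exact Or.inr ⟨h₁, h₂⟩
        · exact Or.inr ⟨h₁, h₄⟩

/-- Arc contraction: identify the endpoints of the arc `(u,v)`; arcs between `u` and
`v` do not yield a loop. -/
def Digraph.contractArc {A : Type} (H : Digraph A) (u v : A) :
    Digraph (Quotient (pairSetoid u v)) where
  Adj X Y := ∃ a b, Quotient.mk (pairSetoid u v) a = X ∧ Quotient.mk (pairSetoid u v) b = Y ∧
    H.Adj a b ∧ ¬(a ≠ b ∧ a ∈ ({u, v} : Set A) ∧ b ∈ ({u, v} : Set A))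

/-- `MRMinor M H`: `M` is a monotone reversible minor of `H`, i.e. `M` can be
obtained (up to isomorphism) from `H` by a finite sequence of sink deletions,
arc contractions, and loop deletions. -/
inductive MRMinor : ∀ {A : Type}, Digraph A → ∀ {B : Type}, Digraph B → Prop
  | of_iso {A B : Type} {M : Digraph A} {H : Digraph B} :
      DigraphIso M H → MRMinor M H
  | sink_del {A B : Type} {M : Digraph A} {H : Digraph B} (t : B) :
      H.IsSinkVert t → MRMinor M (H.sinkDelete t) → MRMinor M H
  | contract {A B : Type} {M : Digraph A} {H : Digraph B} (u v : B) :
      H.Adj u v → MRMinor M (H.contractArc u v) → MRMinor M H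
  | loop_del {A B : Type} {M : Digraph A} {H : Digraph B} (u : B) :
      H.Adj u u → MRMinor M (H.deleteLoop u) → MRMinor M H

/-- `SinkDelSeq H F`: `F` is obtained from `H` by a finite sequence of sink deletions. -/
inductive SinkDelSeq : ∀ {A : Type}, Digraph A → ∀ {B : Type}, Digraph B → Prop
  | refl {A : Type} (H : Digraph A) : SinkDelSeq H H
  | step {A : Type} {H : Digraph A} (t : A) {B : Type} {F : Digraph B} :
      H.IsSinkVert t → SinkDelSeq (H.sinkDelete t) F → SinkDelSeq H F

/-- The directed split of an undirected graph `F`: vertices `V(F) ⊕ E(F)`, with arcs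
from each edge `e = {u,v}` to `u` and to `v`. -/
def dsplit {α : Type} (F : SimpleGraph α) : Digraph (α ⊕ F.edgeSet) where
  Adj x y :=
    match x, y with
    | Sum.inr e, Sum.inl u => u ∈ e.1
    | _, _ => False

/-- `D` has an induced matching gadget of size `k`: arcs `(s i, w i)` with the `w i`
pairwise distinct such that no source of `D` reaches two distinct `w i`. -/
def HasIMG {A : Type} (D : Digraph A) (k : ℕ) : Prop :=
  ∃ s w : Fin k → A, (∀ i, D.Adj (s i) (w i)) ∧ Function.Injective w ∧
    ∀ x, D.IsSrc x → ∀ i j, D.Reaches x (w i) → D.Reaches x (w j) → i = j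

/-- The maximum size of an induced matching gadget of `D`. -/
def imgNum {A : Type} (D : Digraph A) : ℕ := sSup {k | HasIMG D k}

/-- A fractional cover of a DAG `D`: nonnegative weights on the sources such that each
non-source is covered with total weight at least 1; the total weight is at least 1. -/
def Digraph.IsFracCover {A : Type} (D : Digraph A) (ψ : A → ℝ) : Prop :=
  (∀ s, 0 ≤ ψ s) ∧ (∀ s, ¬ D.IsSrc s → ψ s = 0) ∧
    (∀ v, ¬ D.IsSrc v → 1 ≤ ∑ᶠ s ∈ {s | D.IsSrc s ∧ v ∈ D.reachSet s}, ψ s) ∧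
    1 ≤ ∑ᶠ s ∈ {s | D.IsSrc s}, ψ s

/-- The fractional cover number of a DAG: the minimum weight of a fractional cover. -/
def Digraph.dagFracCoverNum {A : Type} (D : Digraph A) : ℝ :=
  sInf {w | ∃ ψ : A → ℝ, D.IsFracCover ψ ∧ (∑ᶠ s ∈ {s | D.IsSrc s}, ψ s) = w}

/-- The fractional cover number `ρ*(H)` of a digraph: the fractional cover number of
its condensation. -/
def Digraph.fracCoverNum {A : Type} (G : Digraph A) : ℝ := G.cond.dagFracCoverNum


/-!
`R(H)` has a star-shaped tree decomposition: the center bag consists of the vertices outside the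
source components, and every hyperedge `R(s)` is a leaf bag. A vertex of a source component lies
in exactly one hyperedge, its own `R(s)`, so the decomposition is valid. A leaf is covered by a
single hyperedge, at cost `1 ≤ ρ*(H)`. A fractional cover `ψ` of the condensation, put on the
hyperedges through `S ↦ R(S)` (injective on sources), fractionally covers the center at the same
weight, because a vertex lies in `R(S)` exactly when its component is reachable from `S`.
-/

lemma single_le_finsum_mem {α M : Type*} [AddCommMonoid M] [PartialOrder M]
    [IsOrderedAddMonoid M] {s : Set α} {f : α → M} (hs : s.Finite) (hf : ∀ j ∈ s, 0 ≤ f j)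
    {i : α} (hi : i ∈ s) : f i ≤ ∑ᶠ j ∈ s, f j := by
  rw [finsum_mem_eq_finite_toFinset_sum f hs]
  exact Finset.single_le_sum (fun j hj => hf j (hs.mem_toFinset.1 hj)) (hs.mem_toFinset.2 hi)

namespace HGraph

variable {V : Type} {H : HGraph V}

lemma coverWeight_nonneg {X : Set V} {γ : Set V → ℝ} (hγ : H.IsFracEdgeCover X γ) :
    0 ≤ H.coverWeight γ :=
  finsum_nonneg fun e => finsum_nonneg fun _ => hγ.1 e

lemma fracCoverOf_le_coverWeight {X : Set V} {γ : Set V → ℝ} (hγ : H.IsFracEdgeCover X γ) :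
    H.fracCoverOf X ≤ H.coverWeight γ :=
  csInf_le ⟨0, by rintro _ ⟨γ, hγ, rfl⟩; exact coverWeight_nonneg hγ⟩ ⟨γ, hγ, rfl⟩

lemma fracCoverOf_nonneg (X : Set V) : 0 ≤ H.fracCoverOf X :=
  Real.sInf_nonneg <| by rintro _ ⟨γ, hγ, rfl⟩; exact coverWeight_nonneg hγ

open Classical in
lemma fracCoverOf_le_finsum {ι : Type} {f : ι → Set V} {S : Set ι}
    (hfS : ∀ i ∈ S, f i ∈ H.edges) (hf : S.InjOn f) {ψ : ι → ℝ} (hψ : ∀ i ∈ S, 0 ≤ ψ i)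
    {X : Set V} (hX : ∀ v ∈ X, 1 ≤ ∑ᶠ i ∈ {i ∈ S | v ∈ f i}, ψ i) :
    H.fracCoverOf X ≤ ∑ᶠ i ∈ S, ψ i := by
  obtain ⟨γ, hγ_def⟩ : ∃ γ : Set V → ℝ,
      ∀ e, γ e = if h : ∃ i ∈ S, f i = e then ψ h.choose else 0 := ⟨_, fun _ => rfl⟩
  have hγf : ∀ i ∈ S, γ (f i) = ψ i := fun i hi => by
    have h : ∃ j ∈ S, f j = f i := ⟨i, hi, rfl⟩
    rw [hγ_def, dif_pos h, hf h.choose_spec.1 hi h.choose_spec.2]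
  have hγ_supp : ∀ e ∈ Function.support γ, ∃ i ∈ S, f i = e := fun e he => by
    by_contra h
    exact he (by rw [hγ_def, dif_neg h])
  have hsum : ∀ E : Set (Set V), ∑ᶠ e ∈ E, γ e = ∑ᶠ i ∈ {i ∈ S | f i ∈ E}, ψ i := fun E => by
    rw [finsum_mem_inter_support_eq' γ E (f '' {i ∈ S | f i ∈ E}), finsum_mem_image]
    · exact finsum_mem_congr rfl fun i hi => hγf i hi.1
    · exact hf.mono fun i hi => hi.1
    · rintro _ he
      obtain ⟨i, hi, rfl⟩ := hγ_supp _ he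
      exact ⟨fun hiE => ⟨i, ⟨hi, hiE⟩, rfl⟩, fun ⟨j, hj, hji⟩ => hji ▸ hj.2⟩
  have hcover : H.IsFracEdgeCover X γ := by
    refine ⟨fun e => ?_, fun e he => ?_, fun v hv => ?_⟩
    · by_cases h : ∃ i ∈ S, f i = e
      · rw [hγ_def, dif_pos h]; exact hψ _ h.choose_spec.1
      · rw [hγ_def, dif_neg h]
    · rw [hγ_def, dif_neg fun ⟨i, hi, hie⟩ => he (hie ▸ hfS i hi)]
    · have hcontain : {i ∈ S | f i ∈ {e ∈ H.edges | v ∈ e}} = {i ∈ S | v ∈ f i} := by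
        ext i
        exact and_congr_right fun hi => and_iff_right (hfS i hi)
      rw [hsum, hcontain]
      exact hX v hv
  calc H.fracCoverOf X ≤ H.coverWeight γ := fracCoverOf_le_coverWeight hcover
    _ = ∑ᶠ i ∈ S, ψ i := by
      rw [coverWeight, hsum]
      exact finsum_mem_congr (Set.sep_eq_self_iff_mem_true.2 hfS) fun _ _ => rfl

lemma fracCoverOf_le_one_of_mem_edges {e : Set V} (he : e ∈ H.edges) : H.fracCoverOf e ≤ 1 := by
  simpa [finsum_unique] using
    fracCoverOf_le_finsum (f := fun _ : Unit => e) (S := Set.univ) (ψ := 1) (fun _ _ => he)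
      (Set.injOn_of_subsingleton _ _) (fun _ _ => zero_le_one) (X := e)
      (fun v hv => by simp [hv, finsum_unique])

lemma fracCoverOf_empty_nonpos : H.fracCoverOf ∅ ≤ 0 := by
  simpa using fracCoverOf_le_finsum (f := id) (S := ∅) (ψ := 0) (by simp) (by simp) (by simp)
    (X := ∅) (by simp)

lemma fhtw_le_of_forall_fracCoverOf_bag_le (td : H.TreeDecomp) {w : ℝ}
    (h : ∀ t, H.fracCoverOf (td.bag t) ≤ w) : H.fhtw ≤ w := by
  have : Nonempty (Fin td.n) := td.isTree.connected.nonempty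
  have hbdd : BddBelow {w | ∃ td : H.TreeDecomp, (⨆ t, H.fracCoverOf (td.bag t)) = w} :=
    ⟨0, by rintro _ ⟨td', rfl⟩; exact Real.iSup_nonneg fun _ => fracCoverOf_nonneg _⟩
  exact (csInf_le hbdd ⟨td, rfl⟩).trans (ciSup_le h)

open SimpleGraph in
def TreeDecomp.star {k : ℕ} (C : Set V) (B : Fin k → Set V) (hC : C ⊆ H.verts)
    (hB : ∀ i, B i ⊆ H.verts) (hverts : ∀ v ∈ H.verts, v ∈ C ∨ ∃ i, v ∈ B i)
    (hedges : ∀ e ∈ H.edges, e ⊆ C ∨ ∃ i, e ⊆ B i)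
    (hleaf : ∀ v ∉ C, ∀ i j, v ∈ B i → v ∈ B j → i = j) : H.TreeDecomp where
  n := k + 1
  tree := starGraph 0
  isTree := isTree_starGraph 0
  bag := Fin.cases C B
  bag_subset := Fin.cases hC hB
  verts_covered v hv := by
    obtain hvC | ⟨i, hvB⟩ := hverts v hv
    exacts [⟨0, hvC⟩, ⟨i.succ, hvB⟩]
  edges_covered e he := by
    obtain heC | ⟨i, heB⟩ := hedges e he
    exacts [⟨0, heC⟩, ⟨i.succ, heB⟩]
  bags_connected v t₁ t₂ h₁ h₂ := by
    by_cases hvC : v ∈ C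
    · have hcenter : ∀ t (ht : v ∈ Fin.cases (motive := fun _ => Set V) C B t),
          ((starGraph 0).induce {t | v ∈ Fin.cases (motive := fun _ => Set V) C B t}).Reachable
            ⟨t, ht⟩ ⟨0, hvC⟩ := fun t ht => by
        by_cases ht0 : t = 0
        · subst ht0; rfl
        · exact Adj.reachable (induce_adj.2 (starGraph_center_adj' (Ne.symm ht0)))
      exact (hcenter t₁ h₁).trans (hcenter t₂ h₂).symm
    · cases t₁ using Fin.cases with
      | zero => exact absurd h₁ hvC
      | succ i =>
        cases t₂ using Fin.cases with
        | zero => exact absurd h₂ hvC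
        | succ j =>
          obtain rfl := hleaf v hvC i j h₁ h₂
          rfl

end HGraph

namespace Digraph

variable {V : Type} (H : Digraph V)

lemma reachSet_eq_of_reaches {u v : V} (huv : H.Reaches u v) (hvu : H.Reaches v u) :
    H.reachSet u = H.reachSet v :=
  Set.ext fun _ => ⟨hvu.trans, huv.trans⟩

lemma eq_reachSet_of_mem_reachHyp_edges {e : Set V} (he : e ∈ H.reachHyp.edges) {v : V}
    (hv : H.InSourceComp v) (hve : v ∈ e) : e = H.reachSet v := by
  obtain ⟨s, -, rfl⟩ := he
  exact H.reachSet_eq_of_reaches hve (hv s hve)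

lemma exists_inSourceComp_reaches [Finite V] (v : V) :
    ∃ s, H.InSourceComp s ∧ H.Reaches s v := by
  let reachesStrictly : V → V → Prop := fun u w => H.Reaches u w ∧ ¬ H.Reaches w u
  have : IsTrans V reachesStrictly :=
    ⟨fun _ _ _ h₁ h₂ => ⟨h₁.1.trans h₂.1, fun h => h₁.2 (h₂.1.trans h)⟩⟩
  have : Std.Irrefl reachesStrictly := ⟨fun _ h => h.2 h.1⟩
  obtain ⟨s, hsv, hmin⟩ := (Finite.wellFounded_of_trans_of_irrefl reachesStrictly).has_min
    {u | H.Reaches u v} ⟨v, .refl⟩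
  exact ⟨s, fun u hus => by_contra fun hsu => hmin u (hus.trans hsv) ⟨hus, hsu⟩, hsv⟩

lemma exists_adj_into_scc {u s : V} (hus : H.Reaches u s) (hsu : ¬ H.Reaches s u) :
    ∃ a b, H.Adj a b ∧ H.sccSetoid.r b s ∧ ¬ H.sccSetoid.r a s := by
  induction hus using Relation.ReflTransGen.head_induction_on with
  | refl => exact absurd .refl hsu
  | @head a c hac hcs ih =>
    by_cases hsc : H.Reaches s c
    · exact ⟨a, c, hac, ⟨hcs, hsc⟩, fun h => hsu h.2⟩
    · exact ih hsc

lemma inSourceComp_iff_isSrc_cond {s : V} :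
    H.InSourceComp s ↔ H.cond.IsSrc ⟦s⟧ := by
  constructor
  · rintro hs _ ⟨hne, a, b, rfl, hb, hab⟩
    have has : H.Reaches a s := (Relation.ReflTransGen.single hab).trans (Quotient.exact hb).1
    exact hne (Quotient.sound ⟨has, hs a has⟩)
  · intro hsrc u hus
    by_contra hsu
    obtain ⟨a, b, hab, hbs, has⟩ := H.exists_adj_into_scc hus hsu
    exact hsrc ⟦a⟧ ⟨fun h => has (Quotient.exact h), a, b, rfl, Quotient.sound hbs, hab⟩

lemma cond_reaches_mk_iff {a b : V} : H.cond.Reaches ⟦a⟧ ⟦b⟧ ↔ H.Reaches a b := by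
  constructor
  · suffices ∀ {X Y}, H.cond.Reaches X Y → ∀ a b, ⟦a⟧ = X → ⟦b⟧ = Y → H.Reaches a b from
      fun h => this h a b rfl rfl
    intro X Y h
    induction h with
    | refl => exact fun a b ha hb => (Quotient.exact (ha.trans hb.symm)).1
    | tail _ hZY ih =>
      obtain ⟨-, c, d, hc, hd, hcd⟩ := hZY
      exact fun a b ha hb => ((ih a c ha hc).tail hcd).trans (Quotient.exact (hd.trans hb.symm)).1
  · intro h
    induction h with
    | refl => exact .refl
    | @tail c d _ hcd ih =>
      by_cases hcd' : (⟦c⟧ : Quotient H.sccSetoid) = ⟦d⟧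
      · rwa [← hcd']
      · exact ih.tail ⟨hcd', c, d, rfl, rfl, hcd⟩

def compReachSet : Quotient H.sccSetoid → Set V :=
  Quotient.lift H.reachSet fun _ _ h => H.reachSet_eq_of_reaches h.1 h.2

lemma mem_compReachSet_iff {X : Quotient H.sccSetoid} {v : V} :
    v ∈ H.compReachSet X ↔ H.cond.Reaches X ⟦v⟧ := by
  induction X using Quotient.ind
  exact H.cond_reaches_mk_iff.symm

lemma compReachSet_mem_edges {X : Quotient H.sccSetoid} (hX : H.cond.IsSrc X) :
    H.compReachSet X ∈ H.reachHyp.edges := by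
  induction X using Quotient.ind with
  | _ s => exact ⟨s, H.inSourceComp_iff_isSrc_cond.2 hX, rfl⟩

lemma injOn_compReachSet : {X | H.cond.IsSrc X}.InjOn H.compReachSet := by
  intro X hX Y _ hXY
  induction X using Quotient.ind with | _ a =>
  induction Y using Quotient.ind with | _ b =>
  have hba : a ∈ H.compReachSet ⟦b⟧ := by rw [← hXY]; exact .refl
  exact Quotient.sound ⟨H.inSourceComp_iff_isSrc_cond.2 hX b hba, hba⟩

lemma exists_isSrc_cond_reaches [Finite V] (X : Quotient H.sccSetoid) :
    ∃ S, H.cond.IsSrc S ∧ H.cond.Reaches S X := by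
  induction X using Quotient.ind with | _ v =>
  obtain ⟨s, hs, hsv⟩ := H.exists_inSourceComp_reaches v
  exact ⟨⟦s⟧, H.inSourceComp_iff_isSrc_cond.1 hs, H.cond_reaches_mk_iff.2 hsv⟩

lemma isFracCover_indicator_isSrc_cond [Finite V] (v : V) :
    H.cond.IsFracCover ({X | H.cond.IsSrc X}.indicator 1) := by
  set ψ : Quotient H.sccSetoid → ℝ := {X | H.cond.IsSrc X}.indicator 1
  have hψ : ∀ X, 0 ≤ ψ X := Set.indicator_nonneg fun _ _ => zero_le_one
  have hsource {S : Quotient H.sccSetoid} {T : Set (Quotient H.sccSetoid)}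
      (hS : H.cond.IsSrc S) (hST : S ∈ T) : 1 ≤ ∑ᶠ X ∈ T, ψ X :=
    calc 1 = ψ S := (Set.indicator_of_mem (s := {X | H.cond.IsSrc X}) hS 1).symm
      _ ≤ ∑ᶠ X ∈ T, ψ X := single_le_finsum_mem (Set.toFinite T) (fun X _ => hψ X) hST
  refine ⟨hψ, fun _ hX => Set.indicator_of_notMem hX _, fun X _ => ?_, ?_⟩
  · obtain ⟨S, hS, hSX⟩ := H.exists_isSrc_cond_reaches X
    exact hsource hS ⟨hS, hSX⟩
  · obtain ⟨S, hS, -⟩ := H.exists_isSrc_cond_reaches ⟦v⟧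
    exact hsource hS hS

lemma dagFracCoverNum_nonneg {A : Type} (D : Digraph A) : 0 ≤ D.dagFracCoverNum :=
  Real.sInf_nonneg <| by rintro _ ⟨ψ, hψ, rfl⟩; exact zero_le_one.trans hψ.2.2.2

lemma fracCoverOf_not_inSourceComp_le {ψ : Quotient H.sccSetoid → ℝ}
    (hψ : H.cond.IsFracCover ψ) :
    H.reachHyp.fracCoverOf {v | ¬ H.InSourceComp v} ≤ ∑ᶠ X ∈ {X | H.cond.IsSrc X}, ψ X := by
  refine HGraph.fracCoverOf_le_finsum (fun X hX => H.compReachSet_mem_edges hX)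
    H.injOn_compReachSet (fun X _ => hψ.1 X) fun v hv => ?_
  have hnsrc : ¬ H.cond.IsSrc ⟦v⟧ := fun h => hv (H.inSourceComp_iff_isSrc_cond.2 h)
  have hsources : {X | H.cond.IsSrc X ∧ ⟦v⟧ ∈ H.cond.reachSet X} =
      {X ∈ {X | H.cond.IsSrc X} | v ∈ H.compReachSet X} :=
    Set.ext fun _ => and_congr_right fun _ => H.mem_compReachSet_iff.symm
  exact hsources ▸ hψ.2.2.1 ⟦v⟧ hnsrc

def reachHypDecomp [Finite V] : H.reachHyp.TreeDecomp :=
  HGraph.TreeDecomp.star {v | ¬ H.InSourceComp v}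
    (fun i => ((Finite.equivFin H.reachHyp.edges).symm i).1)
    (Set.subset_univ _) (fun _ => Set.subset_univ _)
    (fun v _ => or_iff_not_imp_left.2 fun hv =>
      ⟨Finite.equivFin _ ⟨_, v, not_not.1 hv, rfl⟩, by rw [Equiv.symm_apply_apply]; exact .refl⟩)
    (fun e he => Or.inr ⟨Finite.equivFin _ ⟨e, he⟩, by rw [Equiv.symm_apply_apply]⟩)
    (fun v hv i j hi hj => (Finite.equivFin H.reachHyp.edges).symm.injective <| Subtype.ext <|
      (H.eq_reachSet_of_mem_reachHyp_edges (Subtype.prop _) (not_not.1 hv) hi).trans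
        (H.eq_reachSet_of_mem_reachHyp_edges (Subtype.prop _) (not_not.1 hv) hj).symm)

end Digraph

theorem stmt11 {V : Type} [Fintype V] (H : Digraph V) :
    H.reachHyp.fhtw ≤ H.fracCoverNum := by
  refine HGraph.fhtw_le_of_forall_fracCoverOf_bag_le H.reachHypDecomp fun t => ?_
  obtain hbag | ⟨v, -⟩ := (H.reachHypDecomp.bag t).eq_empty_or_nonempty
  · rw [hbag]
    exact HGraph.fracCoverOf_empty_nonpos.trans H.cond.dagFracCoverNum_nonneg
  refine le_csInf ⟨_, _, H.isFracCover_indicator_isSrc_cond v, rfl⟩ ?_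
  rintro _ ⟨ψ, hψ, rfl⟩
  cases t using Fin.cases with
  | zero => exact H.fracCoverOf_not_inSourceComp_le hψ
  | succ i =>
    exact (HGraph.fracCoverOf_le_one_of_mem_edges
      ((Finite.equivFin H.reachHyp.edges).symm i).2).trans hψ.2.2.2
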